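/- Let V_1, ..., V_j be distinct coordinates of I and let D ⊆ I be disjoint from {V_1, ..., V_j}. For each i ∈ {1, ..., j} let C_i ⊆ {V_{i+1}, ..., V_j} ∪ D (so each conditioning set contains only variables strictly later in the list, together with D). If for every assignment ω ∈ Ω one has ∏_{i=1}^j P(V_i = ω_{V_i} | C_i = ω|_{C_i}) = P({V_1, ..., V_j} = ω | D = ω|_D), then for every k ∈ {1, ..., j} and every assignment ω ∈ Ω one has ∏_{i=k}^j P(V_i = ω_{V_i} | C_i = ω|_{C_i}) = P({V_k, ..., V_j} = ω | D = ω|_D). -/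
import Mathlib


open Finset

/-- Marginal probability `P(S = ω|_S)` of a strictly positive pmf `P` on a finite
product: the sum of `P ω'` over all assignments `ω'` agreeing with `ω` on `S`. -/
noncomputable def marg {I : Type} [Fintype I] [DecidableEq I] {F : I → Type}
    [∀ i, Fintype (F i)] [∀ i, DecidableEq (F i)]
    (P : (∀ i, F i) → ℝ) (S : Finset I) (ω : ∀ i, F i) : ℝ :=
  ∑ ω' : ∀ i, F i, if ∀ i ∈ S, ω' i = ω i then P ω' else 0

/-- Elementary conditional probability `P(T = ω|_T | S = ω|_S)`. -/
noncomputable def condP {I : Type} [Fintype I] [DecidableEq I] {F : I → Type}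
    [∀ i, Fintype (F i)] [∀ i, DecidableEq (F i)]
    (P : (∀ i, F i) → ℝ) (T S : Finset I) (ω : ∀ i, F i) : ℝ :=
  marg P (S ∪ T) ω / marg P S ω

/-- Conditional independence of coordinates `a` and `b` given the set `S`. -/
def condIndep {I : Type} [Fintype I] [DecidableEq I] {F : I → Type}
    [∀ i, Fintype (F i)] [∀ i, DecidableEq (F i)]
    (P : (∀ i, F i) → ℝ) (a b : I) (S : Finset I) : Prop :=
  ∀ ω, condP P {a, b} S ω = condP P {a} S ω * condP P {b} S ω


section aux
variable {I : Type} [Fintype I] [DecidableEq I] {F : I → Type}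
    [∀ i, Fintype (F i)] [∀ i, DecidableEq (F i)]
    (P : (∀ i, F i) → ℝ)

lemma marg_pos (hpos : ∀ ω, 0 < P ω) (S : Finset I) (ω : ∀ i, F i) :
    0 < marg P S ω := by
  unfold marg
  refine Finset.sum_pos' (fun ω' _ => ?_) ⟨ω, mem_univ ω, by simp [hpos ω]⟩
  split_ifs
  · exact (hpos ω').le
  · exact le_refl 0

lemma marg_update {a : I} {S : Finset I} (ha : a ∉ S) (ω : ∀ i, F i) (x : F a) :
    marg P S (Function.update ω a x) = marg P S ω := by
  unfold marg
  refine sum_congr rfl fun ω' _ => ?_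
  refine if_congr ⟨fun hh i hi => ?_, fun hh i hi => ?_⟩ rfl rfl
  · rw [hh i hi, Function.update_of_ne (ne_of_mem_of_not_mem hi ha)]
  · rw [hh i hi, Function.update_of_ne (ne_of_mem_of_not_mem hi ha)]

lemma sum_marg_insert {a : I} {S : Finset I} (ha : a ∉ S) (ω : ∀ i, F i) :
    ∑ x : F a, marg P (insert a S) (Function.update ω a x) = marg P S ω := by
  unfold marg
  rw [Finset.sum_comm]
  refine sum_congr rfl fun ω' _ => ?_
  have hcond : ∀ x : F a, (∀ i ∈ insert a S, ω' i = Function.update ω a x i) ↔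
      (ω' a = x ∧ ∀ i ∈ S, ω' i = ω i) := by
    intro x
    rw [Finset.forall_mem_insert, Function.update_self]
    constructor
    · rintro ⟨h1, h2⟩
      exact ⟨h1, fun i hi => by
        rw [h2 i hi, Function.update_of_ne (ne_of_mem_of_not_mem hi ha)]⟩
    · rintro ⟨h1, h2⟩
      exact ⟨h1, fun i hi => by
        rw [h2 i hi, Function.update_of_ne (ne_of_mem_of_not_mem hi ha)]⟩
  simp only [hcond, ite_and]
  rw [Finset.sum_ite_eq univ (ω' a)]
  simp

lemma condP_update {a : I} {T S : Finset I} (ha1 : a ∉ S) (ha2 : a ∉ T)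
    (ω : ∀ i, F i) (x : F a) :
    condP P T S (Function.update ω a x) = condP P T S ω := by
  unfold condP
  rw [marg_update P (fun hc => (mem_union.1 hc).elim ha1 ha2) ω x,
    marg_update P ha1 ω x]

lemma sum_condP_single (hpos : ∀ ω, 0 < P ω) {a : I} {S : Finset I} (ha : a ∉ S)
    (ω : ∀ i, F i) :
    ∑ x : F a, condP P {a} S (Function.update ω a x) = 1 := by
  unfold condP
  have hSA : S ∪ {a} = insert a S := by
    rw [Finset.union_comm]; exact Finset.insert_eq a S ▸ rfl
  simp only [hSA, marg_update P ha ω]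
  rw [← Finset.sum_div, sum_marg_insert P ha ω,
    div_self (marg_pos P hpos S ω).ne']

lemma sum_condP_insert (hpos : ∀ ω, 0 < P ω) {a : I} {S D : Finset I}
    (haD : a ∉ D) (haS : a ∉ S) (ω : ∀ i, F i) :
    ∑ x : F a, condP P (insert a S) D (Function.update ω a x) = condP P S D ω := by
  unfold condP
  have hU : D ∪ insert a S = insert a (D ∪ S) := Finset.union_insert a D S
  have haDS : a ∉ D ∪ S := fun hc => (mem_union.1 hc).elim haD haS
  simp only [hU, marg_update P haD ω]
  rw [← Finset.sum_div, sum_marg_insert P haDS ω]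

end aux

theorem prefix_marginalization {I : Type} [Fintype I] [DecidableEq I] {F : I → Type}
    [∀ i, Fintype (F i)] [∀ i, DecidableEq (F i)] [∀ i, Nonempty (F i)]
    (P : (∀ i, F i) → ℝ) (hpos : ∀ ω, 0 < P ω) (hsum : ∑ ω, P ω = 1)
    {j : ℕ} (V : Fin j → I) (hV : Function.Injective V)
    (D : Finset I) (hD : ∀ i, V i ∉ D)
    (C : Fin j → Finset I)
    (hC : ∀ i : Fin j, C i ⊆ (univ.filter (fun i' => i < i')).image V ∪ D)
    (h : ∀ ω, (∏ i, condP P {V i} (C i) ω) = condP P (univ.image V) D ω) :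
    ∀ k : Fin j, ∀ ω,
      (∏ i ∈ univ.filter (fun i => k ≤ i), condP P {V i} (C i) ω) =
        condP P ((univ.filter (fun i => k ≤ i)).image V) D ω := by
  suffices H : ∀ m (hm : m < j) (ω : ∀ i, F i),
      (∏ i ∈ univ.filter (fun i => (⟨m, hm⟩ : Fin j) ≤ i), condP P {V i} (C i) ω) =
        condP P ((univ.filter (fun i => (⟨m, hm⟩ : Fin j) ≤ i)).image V) D ω by
    intro k ω; exact H k.1 k.2 ω
  intro m
  induction m with
  | zero =>
    intro hm ω
    have huniv : univ.filter (fun i => (⟨0, hm⟩ : Fin j) ≤ i) = univ := by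
      apply Finset.filter_true_of_mem
      intro i _
      exact Fin.mk_le_of_le_val (Nat.zero_le _)
    rw [huniv]
    exact h ω
  | succ n ih =>
    intro hm ω
    have hn : n < j := Nat.lt_of_succ_lt hm
    set k : Fin j := ⟨n, hn⟩ with hk
    set k' : Fin j := ⟨n + 1, hm⟩ with hk'
    set a := V k with hadef
    set T' := univ.filter (fun i => k' ≤ i) with hT'
    have hsplit : univ.filter (fun i => k ≤ i) = insert k T' := by
      ext i
      simp only [hT', mem_insert, mem_filter, mem_univ, true_and, Fin.le_def, hk, hk',
        Fin.ext_iff]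
      omega
    have hkT' : k ∉ T' := by
      simp [hT', Fin.le_def, hk, hk']
    -- membership facts
    have haCk : a ∉ C k := by
      intro hc
      rcases mem_union.1 (hC k hc) with h1 | h1
      · obtain ⟨i', hi', hvi⟩ := mem_image.1 h1
        have hki : k < i' := (mem_filter.1 hi').2
        have heq : i' = k := hV hvi
        subst heq
        exact absurd hki (lt_irrefl _)
      · exact hD k h1
    have hfac : ∀ x, ∀ i ∈ T', condP P {V i} (C i) (Function.update ω a x) =
        condP P {V i} (C i) ω := by
      intro x i hi
      have hki : k < i := by
        have := (mem_filter.1 hi).2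
        simp only [Fin.le_def, hk'] at this
        simp only [Fin.lt_def, hk]
        omega
      refine condP_update P ?_ ?_ ω x
      · intro hc
        rcases mem_union.1 (hC i hc) with h1 | h1
        · obtain ⟨i'', hi'', hv⟩ := mem_image.1 h1
          have hii : i < i'' := (mem_filter.1 hi'').2
          have : i'' = k := hV hv
          subst this
          exact absurd (hki.trans hii) (lt_irrefl _)
        · exact hD k h1
      · intro hc
        have : a = V i := mem_singleton.1 hc
        have : k = i := hV this
        subst this
        exact absurd hki (lt_irrefl _)
    have key : ∀ x, condP P {a} (C k) (Function.update ω a x) *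
        ∏ i ∈ T', condP P {V i} (C i) ω =
        condP P (insert a (T'.image V)) D (Function.update ω a x) := by
      intro x
      have hthis := ih hn (Function.update ω a x)
      rw [hsplit, Finset.prod_insert hkT', Finset.image_insert] at hthis
      have h2 : ∏ i ∈ T', condP P {V i} (C i) (Function.update ω a x) =
          ∏ i ∈ T', condP P {V i} (C i) ω := Finset.prod_congr rfl (hfac x)
      rw [h2] at hthis
      exact hthis
    have hL : ∑ x : F (V k), condP P {a} (C k) (Function.update ω a x) *
        (∏ i ∈ T', condP P {V i} (C i) ω) = ∏ i ∈ T', condP P {V i} (C i) ω := by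
      rw [← Finset.sum_mul, sum_condP_single P hpos haCk ω, one_mul]
    have haT' : a ∉ T'.image V := by
      intro hc
      obtain ⟨i, hi, hvi⟩ := mem_image.1 hc
      have : i = k := hV hvi
      subst this
      exact hkT' hi
    have hR : ∑ x : F (V k), condP P (insert a (T'.image V)) D (Function.update ω a x) =
        condP P (T'.image V) D ω := sum_condP_insert P hpos (hD k) haT' ω
    rw [← hL, ← hR]
    exact Finset.sum_congr rfl fun x _ => key x
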